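/- arXiv:2510.10133 — 2 statements merged into one kernel-verified Lean document; each statement's English description precedes it below -/
import Mathlib

section
/- The generating function for ρ̄_e(n) satisfies ∑_{n≥0} ρ̄_e(n) q^n = (q^8;q^8)_∞/(q^4;q^4)_∞^2 − 2q^4/(1−q^4) − 1, as formal power series. -/
open PowerSeries Finset

/-- The infinite product `(q^a; q^a)_∞ = ∏_{k ≥ 1} (1 - q^{a k})`, encoded as the formal
power series whose `n`-th coefficient is the (stabilized) `n`-th coefficient of the
partial products `∏_{k=1}^{n+1} (1 - q^{a k})`.  For `a ≥ 1` this agrees with the usual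
infinite product since factors with `a k > n` do not affect the coefficient of `q^n`. -/
noncomputable def eulerProd (a : ℕ) : PowerSeries ℚ :=
  PowerSeries.mk fun n =>
    PowerSeries.coeff (R := ℚ) n (∏ k ∈ Finset.range (n + 1), (1 - (PowerSeries.X : PowerSeries ℚ) ^ (a * (k + 1))))

/-- `ρ̄_e(n)`: the number of partitions of `n` whose largest part `m` occurs exactly once
and whose remaining parts form an overpartition of `m` into even parts; an overpartition is
the underlying partition together with the set `S` of overlined part sizes. -/
noncomputable def rhoBarEven (n : ℕ) : ℕ :=
  Nat.card {ps : n.Partition × Finset ℕ // ∃ m ∈ ps.1.parts, ps.1.parts.count m = 1 ∧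
    (∀ x ∈ ps.1.parts, x ≤ m) ∧ (ps.1.parts.erase m).sum = m ∧
    (∀ x ∈ ps.1.parts.erase m, Even x) ∧
    ∀ x ∈ ps.2, x ∈ ps.1.parts.erase m}


noncomputable def geom (m : ℕ) : PowerSeries ℚ :=
  PowerSeries.mk fun j => if m ∣ j then 1 else 0

lemma one_sub_X_pow_mul_geom {m : ℕ} (hm : 0 < m) :
    (1 - (X : PowerSeries ℚ) ^ m) * geom m = 1 := by
  ext j
  rw [sub_mul, one_mul, map_sub, coeff_X_pow_mul' (geom m) m j]
  simp only [geom, coeff_mk, coeff_one]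
  rcases eq_or_ne j 0 with rfl | hj
  · simp [hm.ne']
  · simp only [hj, if_false]
    by_cases hle : m ≤ j
    · simp only [hle, if_true]
      have : m ∣ j - m ↔ m ∣ j := by
        constructor
        · intro h; have := Nat.dvd_add h (dvd_refl m); rwa [Nat.sub_add_cancel hle] at this
        · intro h; exact (Nat.dvd_sub h (dvd_refl m))
      rw [if_congr this rfl rfl]; split <;> simp
    · simp only [hle, if_false, sub_zero]
      have : ¬ m ∣ j := fun h => hle (Nat.le_of_dvd (Nat.pos_of_ne_zero hj) h)
      simp [this]

noncomputable def hs (m : ℕ) : PowerSeries ℚ :=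
  PowerSeries.mk fun j => if j = 0 then 1 else if m ∣ j then 2 else 0

lemma hs_eq {m : ℕ} (hm : 0 < m) :
    (1 - (X : PowerSeries ℚ) ^ (2*m)) * (geom m * geom m) = hs m := by
  have h1 : (1 - (X : PowerSeries ℚ) ^ (2*m)) = (1 - X ^ m) * (1 + X ^ m) := by
    rw [two_mul, pow_add]; ring
  rw [h1, mul_assoc, ← mul_assoc (1 + X^m), mul_comm (1 + X^m), ← mul_assoc, ← mul_assoc,
    one_sub_X_pow_mul_geom hm, one_mul]
  ext j
  rw [add_mul, one_mul, map_add, coeff_X_pow_mul' (geom m) m j]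
  simp only [geom, hs, coeff_mk]
  rcases eq_or_ne j 0 with rfl | hj
  · simp [hm.ne']
  · simp only [hj, if_false]
    by_cases hle : m ≤ j
    · simp only [hle, if_true]
      have : m ∣ j - m ↔ m ∣ j := by
        constructor
        · intro h; have := Nat.dvd_add h (dvd_refl m); rwa [Nat.sub_add_cancel hle] at this
        · intro h; exact (Nat.dvd_sub h (dvd_refl m))
      rw [if_congr this rfl rfl]; split <;> norm_num
    · have : ¬ m ∣ j := fun h => hle (Nat.le_of_dvd (Nat.pos_of_ne_zero hj) h)
      simp [this, hle]


lemma coeff_partial_stable {a : ℕ} (ha : 0 < a) (i : ℕ) {M : ℕ} (hM : i < M) :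
    PowerSeries.coeff i (∏ k ∈ Finset.range M, (1 - (X : PowerSeries ℚ) ^ (a * (k + 1)))) =
    PowerSeries.coeff i (∏ k ∈ Finset.range (i+1), (1 - (X : PowerSeries ℚ) ^ (a * (k + 1)))) := by
  induction M with
  | zero => omega
  | succ M ih =>
    rcases Nat.lt_or_ge i M with h | h
    · rw [← ih h, Finset.prod_range_succ, mul_sub, mul_one, map_sub]
      have : PowerSeries.coeff i ((∏ k ∈ Finset.range M, (1 - (X : PowerSeries ℚ) ^ (a * (k + 1)))) * X ^ (a * (M+1))) = 0 := by
        rw [mul_comm, coeff_X_pow_mul']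
        have : ¬ a * (M+1) ≤ i := by nlinarith
        simp [this]
      rw [this, sub_zero]
    · have : M = i := by omega
      subst this; rfl

lemma eulerProd_mod {a : ℕ} (ha : 0 < a) (n N : ℕ) (hN : n < N) :
    (X : PowerSeries ℚ) ^ (n+1) ∣
      eulerProd a - ∏ k ∈ Finset.range N, (1 - (X : PowerSeries ℚ) ^ (a * (k + 1))) := by
  rw [X_pow_dvd_iff]
  intro i hi
  rw [map_sub, eulerProd, coeff_mk, coeff_partial_stable ha i (by omega : i < N), sub_self]

lemma mod_mul {d : ℕ} {A A' B B' : PowerSeries ℚ} (h1 : (X:PowerSeries ℚ)^d ∣ A - A')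
    (h2 : (X:PowerSeries ℚ)^d ∣ B - B') : (X:PowerSeries ℚ)^d ∣ A * B - A' * B' := by
  have : A * B - A' * B' = A * (B - B') + (A - A') * B' := by ring
  rw [this]
  exact dvd_add (Dvd.dvd.mul_left h2 A) (Dvd.dvd.mul_right h1 B')

lemma mod_inv {d : ℕ} {A B : PowerSeries ℚ} (hA : constantCoeff A ≠ 0)
    (hB : constantCoeff B ≠ 0) (h : (X:PowerSeries ℚ)^d ∣ A - B) :
    (X:PowerSeries ℚ)^d ∣ A⁻¹ - B⁻¹ := by
  have key : A⁻¹ - B⁻¹ = A⁻¹ * (B - A) * B⁻¹ := by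
    rw [mul_sub, sub_mul, mul_assoc, PowerSeries.mul_inv_cancel B hB, mul_one,
      PowerSeries.inv_mul_cancel A hA, one_mul]
  rw [key]
  exact Dvd.dvd.mul_right (Dvd.dvd.mul_left ((dvd_sub_comm).mp h) _) _


lemma constCoeff_partial {a : ℕ} (ha : 0 < a) (N : ℕ) :
    constantCoeff (∏ k ∈ Finset.range N, (1 - (X : PowerSeries ℚ) ^ (a * (k + 1)))) = 1 := by
  rw [map_prod]
  apply Finset.prod_eq_one
  intro k _
  have h : 0 < a * (k+1) := by positivity
  rw [map_sub, map_one, map_pow, constantCoeff_X, zero_pow h.ne', sub_zero]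

lemma constCoeff_eulerProd {a : ℕ} (ha : 0 < a) : constantCoeff (eulerProd a) = 1 := by
  rw [← coeff_zero_eq_constantCoeff_apply, eulerProd, coeff_mk,
    coeff_zero_eq_constantCoeff_apply, constCoeff_partial ha]

lemma prod_mul_geom (N : ℕ) :
    (∏ k ∈ Finset.range N, (1 - (X : PowerSeries ℚ) ^ (4 * (k + 1)))) *
    (∏ k ∈ Finset.range N, geom (4 * (k + 1))) = 1 := by
  rw [← Finset.prod_mul_distrib]
  apply Finset.prod_eq_one
  intro k _
  exact one_sub_X_pow_mul_geom (by positivity)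

lemma prod_geom_inv (N : ℕ) :
    (∏ k ∈ Finset.range N, (1 - (X : PowerSeries ℚ) ^ (4 * (k + 1))))⁻¹ =
    ∏ k ∈ Finset.range N, geom (4 * (k + 1)) := by
  symm
  rw [PowerSeries.eq_inv_iff_mul_eq_one (by rw [constCoeff_partial (by norm_num)]; norm_num),
    mul_comm]
  exact prod_mul_geom N


lemma coeff_main (n : ℕ) :
    PowerSeries.coeff n (eulerProd 8 * ((eulerProd 4)⁻¹) ^ 2) =
    PowerSeries.coeff n (∏ k ∈ Finset.range (n+1), hs (4 * (k + 1))) := by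
  set N := n + 1 with hNdef
  have h8 := eulerProd_mod (a := 8) (by norm_num) n N (by omega)
  have h4 := eulerProd_mod (a := 4) (by norm_num) n N (by omega)
  have hinv : (X : PowerSeries ℚ)^(n+1) ∣ (eulerProd 4)⁻¹ - ∏ k ∈ Finset.range N, geom (4*(k+1)) := by
    rw [← prod_geom_inv N]
    exact mod_inv (by rw [constCoeff_eulerProd (by norm_num)]; norm_num)
      (by rw [constCoeff_partial (by norm_num)]; norm_num) h4
  have hprodeq : (∏ k ∈ Finset.range N, (1 - (X : PowerSeries ℚ) ^ (8 * (k + 1)))) *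
      ((∏ k ∈ Finset.range N, geom (4*(k+1))) * (∏ k ∈ Finset.range N, geom (4*(k+1)))) =
      ∏ k ∈ Finset.range N, hs (4 * (k + 1)) := by
    rw [← Finset.prod_mul_distrib, ← Finset.prod_mul_distrib]
    apply Finset.prod_congr rfl
    intro k _
    have : 8 * (k+1) = 2 * (4 * (k+1)) := by ring
    rw [this]
    exact hs_eq (by positivity)
  have hdvd : (X : PowerSeries ℚ)^(n+1) ∣
      eulerProd 8 * ((eulerProd 4)⁻¹) ^ 2 - ∏ k ∈ Finset.range N, hs (4 * (k + 1)) := by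
    rw [← hprodeq, sq]
    exact mod_mul h8 (mod_mul hinv hinv)
  have := (X_pow_dvd_iff.mp hdvd) n (by omega)
  rw [map_sub, sub_eq_zero] at this
  exact this


def AA (n : ℕ) : Finset (ℕ →₀ ℕ) :=
  (Finset.finsuppAntidiag (range (n+1)) n).filter (fun l => ∀ k ∈ range (n+1), (4*(k+1)) ∣ l k)

lemma coeff_prod_hs (n : ℕ) :
    PowerSeries.coeff n (∏ k ∈ Finset.range (n+1), hs (4 * (k + 1))) =
    ∑ l ∈ AA n, (2:ℚ) ^ (l.support.card) := by
  rw [PowerSeries.coeff_prod]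
  rw [AA, Finset.sum_filter]
  apply Finset.sum_congr rfl
  intro l hl
  rw [Finset.mem_finsuppAntidiag] at hl
  by_cases hdvd : ∀ k ∈ range (n+1), (4*(k+1)) ∣ l k
  · rw [if_pos hdvd]
    have h1 : ∀ k ∈ range (n+1), PowerSeries.coeff (l k) (hs (4*(k+1))) =
        if l k = 0 then (1:ℚ) else 2 := by
      intro k hk
      simp only [hs, coeff_mk]
      rcases eq_or_ne (l k) 0 with h | h
      · simp [h]
      · rw [if_neg h, if_neg h, if_pos (hdvd k hk)]
    rw [Finset.prod_congr rfl h1,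
      ← Finset.prod_filter_mul_prod_filter_not (range (n+1)) (fun k => l k = 0)]
    have h2 : ∏ k ∈ (range (n+1)).filter (fun k => l k = 0), (if l k = 0 then (1:ℚ) else 2) = 1 := by
      apply Finset.prod_eq_one; intro k hk; rw [if_pos (Finset.mem_filter.mp hk).2]
    have h3 : (range (n+1)).filter (fun k => ¬ l k = 0) = l.support := by
      ext k
      simp only [Finset.mem_filter, Finsupp.mem_support_iff, Finset.mem_range, and_iff_right_iff_imp]
      intro hk
      exact Finset.mem_range.mp (hl.2 (Finsupp.mem_support_iff.mpr hk))
    have h4 : ∏ k ∈ (range (n+1)).filter (fun k => ¬ l k = 0), (if l k = 0 then (1:ℚ) else 2) =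
        2 ^ l.support.card := by
      rw [Finset.prod_congr rfl (fun k hk => if_neg (Finset.mem_filter.mp hk).2),
        Finset.prod_const, h3]
    rw [h2, h4, one_mul]
  · rw [if_neg hdvd]
    push_neg at hdvd
    obtain ⟨k₀, hk₀, hnd⟩ := hdvd
    apply Finset.prod_eq_zero hk₀
    have h0 : l k₀ ≠ 0 := fun h => hnd (h ▸ dvd_zero _)
    simp only [hs, coeff_mk, if_neg h0, if_neg hnd]

lemma coeff_corr (n : ℕ) :
    PowerSeries.coeff n (2 * (X : PowerSeries ℚ)^4 * (1 - (X : PowerSeries ℚ)^4)⁻¹) =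
    if 4 ∣ n ∧ 4 ≤ n then 2 else 0 := by
  have hinv : (1 - (X : PowerSeries ℚ)^4)⁻¹ = geom 4 := by
    symm
    rw [PowerSeries.eq_inv_iff_mul_eq_one]
    · rw [mul_comm]; exact one_sub_X_pow_mul_geom (by norm_num)
    · simp
  rw [hinv, show (2 : PowerSeries ℚ) * X^4 * geom 4 = C 2 * (X^4 * geom 4) by
      rw [map_ofNat, mul_assoc], PowerSeries.coeff_C_mul, coeff_X_pow_mul']
  simp only [geom, coeff_mk]
  by_cases hle : 4 ≤ n
  · have : 4 ∣ n - 4 ↔ 4 ∣ n := by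
      constructor
      · intro h; have := Nat.dvd_add h (dvd_refl 4); rwa [Nat.sub_add_cancel hle] at this
      · intro h; exact Nat.dvd_sub h (dvd_refl 4)
    rw [if_pos hle, if_congr this rfl rfl]
    rcases em (4 ∣ n) with h | h <;> simp [h, hle]
  · rw [if_neg hle, if_neg (by tauto)]
    simp


def BB (n : ℕ) : Finset ((_ : ℕ →₀ ℕ) × Finset ℕ) :=
  (AA n).sigma (fun l => l.support.powerset)

def bad (n : ℕ) (x : (_ : ℕ →₀ ℕ) × Finset ℕ) : Prop :=
  n = 0 ∨ ∃ k ∈ range (n+1), 4*(k+1) = n ∧ x.1 k = n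

instance (n : ℕ) (x : (_ : ℕ →₀ ℕ) × Finset ℕ) : Decidable (bad n x) := by
  unfold bad; infer_instance

def GG (n : ℕ) : Finset ((_ : ℕ →₀ ℕ) × Finset ℕ) := (BB n).filter (fun x => ¬ bad n x)

lemma BB_card (n : ℕ) : (BB n).card = ∑ l ∈ AA n, 2 ^ l.support.card := by
  rw [BB, Finset.card_sigma]
  exact Finset.sum_congr rfl fun l _ => Finset.card_powerset _

lemma bad_card (n : ℕ) : ((BB n).filter (bad n)).card =
    if n = 0 then 1 else if 4 ∣ n then 2 else 0 := by
  rcases eq_or_ne n 0 with rfl | hn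
  · rw [if_pos rfl]
    have hfull : (BB 0).filter (bad 0) = BB 0 :=
      Finset.filter_true_of_mem fun x _ => Or.inl rfl
    have hAA : AA 0 = {0} := by
      ext l
      simp only [AA, Finset.mem_filter, Finset.mem_finsuppAntidiag, Finset.mem_singleton]
      constructor
      · rintro ⟨⟨hsum, hsupp⟩, _⟩
        ext j
        rcases eq_or_ne j 0 with rfl | hj
        · simpa using Finset.sum_eq_zero_iff.mp hsum 0 (by simp)
        · by_contra h
          have := hsupp (Finsupp.mem_support_iff.mpr h)
          simp only [Finset.mem_range] at this
          omega
      · rintro rfl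
        refine ⟨⟨by simp, by simp⟩, by simp⟩
    rw [hfull, BB, hAA]
    simp
  · rw [if_neg hn]
    by_cases h4 : 4 ∣ n
    · rw [if_pos h4]
      obtain ⟨m, rfl⟩ := h4
      have hm : 1 ≤ m := by omega
      set k₀ := m - 1 with hk₀
      have hk₀1 : k₀ + 1 = m := by omega
      set l₀ : ℕ →₀ ℕ := Finsupp.single k₀ (4*m) with hl₀
      have hsupp₀ : l₀.support = {k₀} := Finsupp.support_single_ne_zero _ (by omega)
      have hfilter : (BB (4*m)).filter (bad (4*m)) = {⟨l₀, ∅⟩, ⟨l₀, {k₀}⟩} := by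
        ext x
        simp only [Finset.mem_filter, Finset.mem_insert, Finset.mem_singleton]
        constructor
        · rintro ⟨hxB, hbad⟩
          rcases hbad with h | ⟨k, hkmem, hk4, hkval⟩
          · omega
          have hkk₀ : k = k₀ := by omega
          subst hkk₀
          simp only [BB, Finset.mem_sigma, AA, Finset.mem_filter,
            Finset.mem_finsuppAntidiag] at hxB
          obtain ⟨⟨⟨hsum, hsupp⟩, _⟩, hpow⟩ := hxB
          have hx1 : x.1 = l₀ := by
            ext j
            rcases eq_or_ne j k₀ with rfl | hj
            · rw [hkval, hl₀, Finsupp.single_eq_same]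
            · rw [hl₀, Finsupp.single_eq_of_ne (by omega)]
              by_cases hjr : j ∈ range (4*m+1)
              · have hrest : ∑ i ∈ (range (4*m+1)).erase k₀, x.1 i = 0 := by
                  have h1 : x.1 k₀ + ∑ i ∈ (range (4*m+1)).erase k₀, x.1 i
                      = ∑ i ∈ range (4*m+1), x.1 i :=
                    Finset.add_sum_erase _ _ (by simp [Finset.mem_range]; omega)
                  rw [hsum, hkval] at h1
                  omega
                exact Finset.sum_eq_zero_iff.mp hrest j (Finset.mem_erase.mpr ⟨hj, hjr⟩)
              · by_contra h
                exact hjr (hsupp (Finsupp.mem_support_iff.mpr h))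
          have hx2 : x.2 = ∅ ∨ x.2 = {k₀} := by
            have := Finset.mem_powerset.mp hpow
            rw [hx1, hsupp₀] at this
            exact Finset.subset_singleton_iff.mp this
          rcases hx2 with h | h
          · left; rw [← hx1, ← h]
          · right; rw [← hx1, ← h]
        · intro hx
          have hl₀A : l₀ ∈ AA (4*m) := by
            simp only [AA, Finset.mem_filter, Finset.mem_finsuppAntidiag]
            refine ⟨⟨?_, ?_⟩, ?_⟩
            · rw [Finset.sum_eq_single k₀]
              · rw [hl₀, Finsupp.single_eq_same]
              · intro j _ hj; rw [hl₀, Finsupp.single_eq_of_ne (by omega)]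
              · intro h; exfalso; apply h; simp [Finset.mem_range]; omega
            · rw [hsupp₀]; intro j hj; simp only [Finset.mem_singleton] at hj
              simp [hj, Finset.mem_range]; omega
            · intro k hk
              rcases eq_or_ne k k₀ with rfl | hne
              · rw [hl₀, Finsupp.single_eq_same, ← hk₀1]
              · rw [hl₀, Finsupp.single_eq_of_ne (by omega)]; exact dvd_zero _
          have hbad : bad (4*m) (⟨l₀, ∅⟩ : (_ : ℕ →₀ ℕ) × Finset ℕ) := by
            right; exact ⟨k₀, by simp [Finset.mem_range]; omega, by omega,
              by rw [hl₀, Finsupp.single_eq_same]⟩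
          rcases hx with rfl | rfl
          · exact ⟨Finset.mem_sigma.mpr ⟨hl₀A, by simp⟩, hbad⟩
          · exact ⟨Finset.mem_sigma.mpr ⟨hl₀A, by rw [Finset.mem_powerset, hsupp₀]⟩, hbad⟩
      rw [hfilter, Finset.card_insert_of_notMem (by
        simp only [Finset.mem_singleton]
        intro h
        exact (Finset.singleton_ne_empty k₀) (congrArg Sigma.snd h).symm), Finset.card_singleton]
    · rw [if_neg h4]
      rw [Finset.card_eq_zero, Finset.filter_eq_empty_iff]
      rintro x _ (h | ⟨k, _, hk4, _⟩)
      · exact hn h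
      · exact h4 ⟨k+1, hk4.symm⟩

lemma GG_card (n : ℕ) :
    ((BB n).filter (bad n)).card + (GG n).card = (BB n).card :=
  Finset.card_filter_add_card_filter_not (bad n)


/-! ### multiset helpers -/

lemma multiset_sum_sum {ι : Type*} (s : Finset ι) (f : ι → Multiset ℕ) :
    (∑ i ∈ s, f i).sum = ∑ i ∈ s, (f i).sum := by
  classical
  induction s using Finset.cons_induction with
  | empty => simp
  | cons a s ha ih => rw [Finset.sum_cons, Finset.sum_cons, Multiset.sum_add, ih]

lemma mem_le_sum {a : ℕ} {s : Multiset ℕ} (h : a ∈ s) : a ≤ s.sum := by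
  obtain ⟨t, rfl⟩ := Multiset.exists_cons_of_mem h
  simp

/-- the multiset of replicated even parts determined by a function of counts -/
def sr (n : ℕ) (f : ℕ → ℕ) : Multiset ℕ :=
  ∑ k ∈ range (n+1), Multiset.replicate (f k) (2*(k+1))

lemma count_sr (n : ℕ) (f : ℕ → ℕ) (j : ℕ) :
    (sr n f).count (2*(j+1)) = if j < n+1 then f j else 0 := by
  rw [sr, Multiset.count_sum']
  rcases Nat.lt_or_ge j (n+1) with hj | hj
  · rw [if_pos hj, Finset.sum_eq_single j]
    · rw [Multiset.count_replicate, if_pos rfl]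
    · intro k _ hk
      rw [Multiset.count_replicate, if_neg (by omega)]
    · intro h; exact absurd (Finset.mem_range.mpr hj) h
  · rw [if_neg (by omega)]
    apply Finset.sum_eq_zero
    intro k hk
    rw [Multiset.count_replicate, if_neg (by simp at hk; omega)]

lemma mem_sr (n : ℕ) (f : ℕ → ℕ) (a : ℕ) :
    a ∈ sr n f ↔ ∃ k, k < n+1 ∧ f k ≠ 0 ∧ a = 2*(k+1) := by
  rw [sr, Multiset.mem_sum]
  constructor
  · rintro ⟨k, hk, hmem⟩
    rw [Multiset.eq_of_mem_replicate hmem]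
    exact ⟨k, Finset.mem_range.mp hk, by
      rintro h; rw [h] at hmem; simp at hmem, rfl⟩
  · rintro ⟨k, hk, hf, rfl⟩
    exact ⟨k, Finset.mem_range.mpr hk, Multiset.mem_replicate.mpr ⟨hf, rfl⟩⟩

lemma sum_sr (n : ℕ) (f : ℕ → ℕ) :
    (sr n f).sum = ∑ k ∈ range (n+1), f k * (2*(k+1)) := by
  rw [sr, multiset_sum_sum]
  exact Finset.sum_congr rfl fun k _ => by
    rw [Multiset.sum_replicate, smul_eq_mul]

/-- reconstruction: a multiset of positive even numbers, all `≤ n`, is recovered from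
its counts -/
lemma sr_count_eq (n : ℕ) (E : Multiset ℕ) (hpos : ∀ x ∈ E, 0 < x)
    (heven : ∀ x ∈ E, Even x) (hle : ∀ x ∈ E, x ≤ n) :
    sr n (fun k => E.count (2*(k+1))) = E := by
  ext a
  by_cases h : ∃ j, j < n+1 ∧ a = 2*(j+1)
  · obtain ⟨j, hj, rfl⟩ := h
    rw [count_sr, if_pos hj]
  · have h1 : a ∉ sr n (fun k => E.count (2*(k+1))) := by
      rw [mem_sr]
      rintro ⟨k, hk, _, rfl⟩
      exact h ⟨k, hk, rfl⟩
    have h2 : a ∉ E := by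
      intro hmem
      obtain ⟨r, hr⟩ := heven a hmem
      have hp := hpos a hmem
      have hb := hle a hmem
      exact h ⟨r - 1, by omega, by omega⟩
    rw [Multiset.count_eq_zero_of_notMem h1, Multiset.count_eq_zero_of_notMem h2]



/-! ### the bijection -/

def eOf (n : ℕ) (l : ℕ →₀ ℕ) : Multiset ℕ := sr n (fun k => l k / (4*(k+1)))

section facts
variable {n : ℕ} {x : (_ : ℕ →₀ ℕ) × Finset ℕ} (hx : x ∈ GG n)

include hx in
lemma GG_mem_unfold : (∑ k ∈ range (n+1), x.1 k = n) ∧ (x.1.support ⊆ range (n+1)) ∧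
    (∀ k, 4*(k+1) ∣ x.1 k) ∧ x.2 ⊆ x.1.support ∧ ¬ bad n x := by
  have h := Finset.mem_filter.mp hx
  have h1 := Finset.mem_sigma.mp h.1
  have h2 := Finset.mem_filter.mp h1.1
  have h3 := Finset.mem_finsuppAntidiag.mp h2.1
  refine ⟨h3.1, h3.2, ?_, Finset.mem_powerset.mp h1.2, h.2⟩
  intro k
  by_cases hk : k ∈ range (n+1)
  · exact h2.2 k hk
  · have : x.1 k = 0 := by
      by_contra hc
      exact hk (h3.2 (Finsupp.mem_support_iff.mpr hc))
    rw [this]; exact dvd_zero _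

include hx in
lemma GG_sum2 : 2 * (eOf n x.1).sum = n := by
  obtain ⟨hsum, _, hdvd, _, _⟩ := GG_mem_unfold hx
  rw [eOf, sum_sr, Finset.mul_sum]
  rw [← hsum]
  apply Finset.sum_congr (by rw [hsum])
  intro k _
  obtain ⟨c, hc⟩ := hdvd k
  rw [hc, Nat.mul_div_cancel_left c (by positivity)]
  ring

include hx in
lemma GG_nzero : n ≠ 0 := by
  obtain ⟨_, _, _, _, hb⟩ := GG_mem_unfold hx
  exact fun h => hb (Or.inl h)

include hx in
lemma GG_notmem : (eOf n x.1).sum ∉ eOf n x.1 := by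
  obtain ⟨hsum, hsupp, hdvd, _, hb⟩ := GG_mem_unfold hx
  intro hmem
  rw [eOf, mem_sr] at hmem
  obtain ⟨k, hk, hc, hval⟩ := hmem
  obtain ⟨c, hcdef⟩ := hdvd k
  rw [hcdef, Nat.mul_div_cancel_left c (by positivity)] at hc
  have hn2 := GG_sum2 hx
  -- x.1 k ≤ n
  have hle : x.1 k ≤ n := by
    rw [← hsum]
    exact Finset.single_le_sum (f := fun k => x.1 k) (fun i _ => Nat.zero_le _)
      (Finset.mem_range.mpr hk)
  -- 2 * sum = n and sum = 2*(k+1) gives 4*(k+1) = n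
  have h4 : 4*(k+1) = n := by rw [← hn2, eOf, hval]; ring
  have hxk : x.1 k = n := by
    have h1 : 4*(k+1) * c ≤ n := hcdef ▸ hle
    have : c = 1 := by nlinarith [Nat.one_le_iff_ne_zero.mpr hc]
    rw [hcdef, this, mul_one, h4]
  exact hb (Or.inr ⟨k, Finset.mem_range.mpr hk, h4, hxk⟩)

noncomputable def fwdPart (hx : x ∈ GG n) : n.Partition where
  parts := (eOf n x.1).sum ::ₘ eOf n x.1
  parts_pos := by
    intro i hi
    rcases Multiset.mem_cons.mp hi with rfl | hi
    · have := GG_sum2 hx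
      have := GG_nzero hx
      omega
    · rw [eOf, mem_sr] at hi
      obtain ⟨k, _, _, rfl⟩ := hi
      omega
  parts_sum := by
    rw [Multiset.sum_cons]
    have := GG_sum2 hx
    omega

lemma fwdPart_spec (hx : x ∈ GG n) :
    ∃ m ∈ (fwdPart hx).parts, (fwdPart hx).parts.count m = 1 ∧
    (∀ y ∈ (fwdPart hx).parts, y ≤ m) ∧ ((fwdPart hx).parts.erase m).sum = m ∧
    (∀ y ∈ (fwdPart hx).parts.erase m, Even y) ∧
    ∀ y ∈ x.2.image (fun k => 2*(k+1)), y ∈ (fwdPart hx).parts.erase m := by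
  obtain ⟨hsum, hsupp, hdvd, hpow, hb⟩ := GG_mem_unfold hx
  set e := eOf n x.1 with he
  set m := e.sum with hm
  have herase : ((fwdPart hx).parts).erase m = e := Multiset.erase_cons_head m e
  refine ⟨m, Multiset.mem_cons_self _ _, ?_, ?_, ?_, ?_, ?_⟩
  · rw [fwdPart]
    simp only [hm, he, Multiset.count_cons_self]
    rw [Multiset.count_eq_zero_of_notMem (GG_notmem hx)]
  · intro y hy
    rcases Multiset.mem_cons.mp hy with rfl | hy
    · exact le_refl _
    · exact mem_le_sum hy
  · rw [herase]
  · rw [herase]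
    intro y hy
    rw [he, eOf, mem_sr] at hy
    obtain ⟨k, _, _, rfl⟩ := hy
    exact ⟨k+1, by ring⟩
  · rw [herase]
    intro y hy
    obtain ⟨k, hk, rfl⟩ := Finset.mem_image.mp hy
    have hks := hpow hk
    have hkr := hsupp hks
    have hkne := Finsupp.mem_support_iff.mp hks
    rw [he, eOf, mem_sr]
    refine ⟨k, Finset.mem_range.mp hkr, ?_, rfl⟩
    obtain ⟨c, hc⟩ := hdvd k
    rw [hc, Nat.mul_div_cancel_left c (by positivity)]
    intro h
    rw [h, mul_zero] at hc
    exact hkne hc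

end facts

/-! ### inverse direction -/

def Pred (n : ℕ) (ps : n.Partition × Finset ℕ) : Prop :=
  ∃ m ∈ ps.1.parts, ps.1.parts.count m = 1 ∧
    (∀ x ∈ ps.1.parts, x ≤ m) ∧ (ps.1.parts.erase m).sum = m ∧
    (∀ x ∈ ps.1.parts.erase m, Even x) ∧
    ∀ x ∈ ps.2, x ∈ ps.1.parts.erase m

lemma rho_core {n : ℕ} {ps : n.Partition × Finset ℕ} (hps : Pred n ps) :
    ∃ m₀, ps.1.parts = m₀ ::ₘ (ps.1.parts.erase m₀) ∧ (ps.1.parts.erase m₀).sum = m₀ ∧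
      m₀ + m₀ = n ∧ n / 2 = m₀ ∧ ps.1.parts.count m₀ = 1 ∧
      (∀ y ∈ ps.1.parts.erase m₀, 0 < y ∧ Even y ∧ y ≤ n) ∧
      (∀ y ∈ ps.2, y ∈ ps.1.parts.erase m₀) ∧
      sr n (fun k => (ps.1.parts.erase m₀).count (2*(k+1))) = ps.1.parts.erase m₀ := by
  obtain ⟨m₀, hmem, hcount, hmax, hsum, heven, hS⟩ := hps
  have hcons : ps.1.parts = m₀ ::ₘ (ps.1.parts.erase m₀) := (Multiset.cons_erase hmem).symm
  have hps1 := ps.1.parts_sum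
  rw [hcons, Multiset.sum_cons, hsum] at hps1
  have hEfacts : ∀ y ∈ ps.1.parts.erase m₀, 0 < y ∧ Even y ∧ y ≤ n := by
    intro y hy
    have hyp : y ∈ ps.1.parts := Multiset.mem_of_le (Multiset.erase_le _ _) hy
    exact ⟨ps.1.parts_pos hyp, heven y hy, by have := hmax y hyp; omega⟩
  refine ⟨m₀, hcons, hsum, hps1, by omega, hcount, hEfacts, hS, ?_⟩
  exact sr_count_eq n _ (fun y hy => (hEfacts y hy).1) (fun y hy => (hEfacts y hy).2.1)
    (fun y hy => (hEfacts y hy).2.2)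

lemma invl_aux (n : ℕ) (p : n.Partition) :
    ∀ k, 4*(k+1) * ((p.parts.erase (n/2)).count (2*(k+1))) ≠ 0 → k ∈ range (n+1) := by
  intro k h
  have hc : (p.parts.erase (n/2)).count (2*(k+1)) ≠ 0 := by
    intro h0; rw [h0, mul_zero] at h; exact h rfl
  have hmem : 2*(k+1) ∈ p.parts.erase (n/2) := by
    rw [← Multiset.count_pos]; omega
  have hmem2 : 2*(k+1) ∈ p.parts := Multiset.mem_of_le (Multiset.erase_le _ _) hmem
  have := mem_le_sum hmem2
  rw [p.parts_sum] at this
  rw [Finset.mem_range]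
  omega

noncomputable def invl (n : ℕ) (p : n.Partition) : ℕ →₀ ℕ :=
  Finsupp.onFinset (range (n+1)) (fun k => 4*(k+1) * ((p.parts.erase (n/2)).count (2*(k+1))))
    (invl_aux n p)

lemma invl_support (n : ℕ) (p : n.Partition) : (invl n p).support ⊆ range (n+1) :=
  Finsupp.support_onFinset_subset

lemma invl_apply (n : ℕ) (p : n.Partition) (k : ℕ) :
    invl n p k = 4*(k+1) * ((p.parts.erase (n/2)).count (2*(k+1))) := rfl

lemma invl_sum {n : ℕ} {ps : n.Partition × Finset ℕ} (hps : Pred n ps) :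
    ∑ k ∈ range (n+1), invl n ps.1 k = n := by
  obtain ⟨m₀, hcons, hEsum, h2m, hn2, hcount, hE, hS, hrecon⟩ := rho_core hps
  have : ∀ k ∈ range (n+1), invl n ps.1 k =
      2 * (((ps.1.parts.erase m₀).count (2*(k+1))) * (2*(k+1))) := by
    intro k _
    rw [invl_apply, hn2]; ring
  rw [Finset.sum_congr rfl this, ← Finset.mul_sum, ← sum_sr, hrecon, hEsum]
  omega

lemma inv_mem {n : ℕ} {ps : n.Partition × Finset ℕ} (hps : Pred n ps) :
    (⟨invl n ps.1, ps.2.image (fun y => y/2 - 1)⟩ : (_ : ℕ →₀ ℕ) × Finset ℕ) ∈ GG n := by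
  obtain ⟨m₀, hcons, hEsum, h2m, hn2, hcount, hE, hS, hrecon⟩ := rho_core hps
  have hm₀pos : 0 < m₀ := ps.1.parts_pos (by rw [hcons]; exact Multiset.mem_cons_self _ _)
  have hm₀E : m₀ ∉ ps.1.parts.erase m₀ := by
    rw [← Multiset.count_pos, Multiset.count_erase_self, hcount]
    omega
  rw [GG, Finset.mem_filter]
  constructor
  · rw [BB, Finset.mem_sigma]
    constructor
    · rw [AA, Finset.mem_filter, Finset.mem_finsuppAntidiag]
      exact ⟨⟨invl_sum hps, invl_support n ps.1⟩,
        fun k _ => ⟨_, invl_apply n ps.1 k⟩⟩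
    · rw [Finset.mem_powerset]
      intro j hj
      obtain ⟨y, hy, rfl⟩ := Finset.mem_image.mp hj
      have hyE := hS y hy
      obtain ⟨hypos, ⟨r, hr⟩, hyle⟩ := hE y hyE
      have hyeq : 2*((y/2 - 1)+1) = y := by omega
      rw [Finsupp.mem_support_iff, invl_apply, hyeq, hn2]
      have hcnt : 0 < (ps.1.parts.erase m₀).count y := Multiset.count_pos.mpr hyE
      exact Nat.mul_ne_zero (by positivity) (by omega)
  · rintro (h | ⟨k, hk, h4, hval⟩)
    · omega
    · rw [invl_apply, hn2] at hval
      have hcnt : (ps.1.parts.erase m₀).count (2*(k+1)) = 1 := by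
        have h1 : 4*(k+1) * (ps.1.parts.erase m₀).count (2*(k+1)) = 4*(k+1) * 1 := by omega
        exact Nat.eq_of_mul_eq_mul_left (by positivity) h1
      have : 2*(k+1) = m₀ := by omega
      rw [this] at hcnt
      rw [← Multiset.count_pos] at hm₀E
      omega

noncomputable def theEquiv (n : ℕ) :
    {ps : n.Partition × Finset ℕ // Pred n ps} ≃ {x : (_ : ℕ →₀ ℕ) × Finset ℕ // x ∈ GG n} where
  toFun := fun p => ⟨⟨invl n p.1.1, p.1.2.image (fun y => y/2 - 1)⟩, inv_mem p.2⟩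
  invFun := fun x => ⟨(fwdPart x.2, x.1.2.image (fun k => 2*(k+1))), fwdPart_spec x.2⟩
  left_inv := by
    rintro ⟨⟨p, S⟩, hps⟩
    obtain ⟨m₀, hcons, hEsum, h2m, hn2, hcount, hE, hS, hrecon⟩ := rho_core hps
    apply Subtype.ext
    simp only
    have he : eOf n (invl n p) = p.parts.erase m₀ := by
      rw [eOf]
      have hfun : (fun k => invl n p k / (4*(k+1))) =
          (fun k => (p.parts.erase m₀).count (2*(k+1))) := by
        funext k
        rw [invl_apply, hn2, Nat.mul_div_cancel_left _ (by positivity)]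
      rw [hfun]
      exact hrecon
    rw [Prod.mk.injEq]
    constructor
    · apply Nat.Partition.ext
      show ((eOf n (invl n p)).sum ::ₘ eOf n (invl n p)) = p.parts
      rw [he, hEsum, ← hcons]
    · rw [Finset.image_image]
      have : ∀ y ∈ S, ((fun k => 2*(k+1)) ∘ (fun y => y/2 - 1)) y = id y := by
        intro y hy
        obtain ⟨hypos, ⟨r, hr⟩, hyle⟩ := hE y (hS y hy)
        simp only [Function.comp_apply, id_eq]
        omega
      rw [Finset.image_congr this]; exact Finset.image_id
  right_inv := by
    rintro ⟨⟨l, S⟩, hx⟩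
    obtain ⟨hsum, hsupp, hdvd, hpow, hb⟩ := GG_mem_unfold hx
    apply Subtype.ext
    simp only
    have hdiv : n / 2 = (eOf n l).sum := by
      have h := GG_sum2 hx
      change 2 * (eOf n l).sum = n at h
      omega
    have h1 : invl n (fwdPart hx) = l := by
      ext k
      rw [invl_apply]
      have hparts : (fwdPart hx).parts = (eOf n l).sum ::ₘ eOf n l := rfl
      rw [hparts, hdiv, Multiset.erase_cons_head]
      rw [eOf, count_sr]
      rcases Nat.lt_or_ge k (n+1) with hk | hk
      · rw [if_pos hk]
        exact Nat.mul_div_cancel' (hdvd k)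
      · rw [if_neg (by omega), mul_zero]
        symm
        by_contra hc
        have := hsupp (Finsupp.mem_support_iff.mpr hc)
        rw [Finset.mem_range] at this
        omega
    have h2 : (S.image (fun k => 2*(k+1))).image (fun y => y/2 - 1) = S := by
      rw [Finset.image_image]
      have : ∀ k ∈ S, ((fun y => y/2 - 1) ∘ (fun k => 2*(k+1))) k = id k := by
        intro k _
        simp only [Function.comp_apply, id_eq]
        omega
      rw [Finset.image_congr this]; exact Finset.image_id
    rw [h1, h2]

lemma rho_eq_GG (n : ℕ) : rhoBarEven n = (GG n).card := by
  rw [rhoBarEven, ← Nat.card_eq_finsetCard]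
  exact Nat.card_congr (theEquiv n)

/-- `∑ ρ̄_e(n) q^n = (q^8;q^8)_∞/(q^4;q^4)_∞^2 − 2q^4/(1−q^4) − 1`. -/
theorem rhoBarEven_generating_function :
    PowerSeries.mk (fun n => (rhoBarEven n : ℚ)) =
      eulerProd 8 * ((eulerProd 4)⁻¹) ^ 2
        - 2 * (PowerSeries.X : PowerSeries ℚ) ^ 4
            * (1 - (PowerSeries.X : PowerSeries ℚ) ^ 4)⁻¹ - 1 := by
  ext n
  rw [coeff_mk, map_sub, map_sub, coeff_main, coeff_prod_hs, coeff_corr, PowerSeries.coeff_one]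
  have h1 : (∑ l ∈ AA n, (2:ℚ)^(l.support.card)) = ((BB n).card : ℚ) := by
    rw [BB_card]; push_cast; rfl
  rw [h1, rho_eq_GG]
  have h2 := GG_card n
  have h3 := bad_card n
  have hbv : (((BB n).filter (bad n)).card : ℚ) =
      (if 4 ∣ n ∧ 4 ≤ n then (2:ℚ) else 0) + (if n = 0 then (1:ℚ) else 0) := by
    rcases eq_or_ne n 0 with rfl | hn
    · rw [if_pos rfl] at h3
      rw [h3, if_neg (by omega), if_pos rfl]
      norm_num
    · rw [if_neg hn] at h3
      rw [if_neg hn]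
      by_cases h4 : 4 ∣ n
      · rw [if_pos h4] at h3
        have hge : 4 ≤ n := Nat.le_of_dvd (Nat.pos_of_ne_zero hn) h4
        rw [h3, if_pos ⟨h4, hge⟩]
        norm_num
      · rw [if_neg h4] at h3
        rw [h3, if_neg (by tauto)]
        norm_num
  have hcast : ((BB n).card : ℚ) = (((BB n).filter (bad n)).card : ℚ) + ((GG n).card : ℚ) := by
    rw [← h2]; push_cast; ring
  rw [hcast, hbv]
  ring
end

section
/- For every n ≥ 1, ρ_ε(2n) equals the coefficient of q^{2n} in (1/(1−q^2))·(1/(q^4;q^4)_∞ − 1), and ρ_ε(2n+1) = 0. -/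
set_option maxHeartbeats 1600000


open PowerSeries Finset

/-- `ρ_ε(n)`: the number of partitions of `n` whose largest part `m` occurs exactly once
and whose remaining parts form a partition of `m` in which every even part is strictly
less than every odd part. -/
noncomputable def rhoEps (n : ℕ) : ℕ :=
  Nat.card {p : n.Partition // ∃ m ∈ p.parts, p.parts.count m = 1 ∧
    (∀ x ∈ p.parts, x ≤ m) ∧ (p.parts.erase m).sum = m ∧
    ∀ x ∈ p.parts.erase m, ∀ y ∈ p.parts.erase m, Even x → Odd y → x < y}

namespace RhoAux

noncomputable section

variable {α : Type*}

open Finset.HasAntidiagonal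

open scoped Classical

universe u
variable {ι : Type u}

/-- A convenience constructor for the power series whose coefficients indicate a subset. -/
def indicatorSeries (α : Type*) [Semiring α] (s : Set ℕ) : PowerSeries α :=
  PowerSeries.mk fun n => if n ∈ s then 1 else 0

theorem coeff_indicator (s : Set ℕ) [Semiring α] (n : ℕ) :
    coeff (R := α) n (indicatorSeries _ s) = if n ∈ s then 1 else 0 :=
  coeff_mk _ _

theorem coeff_indicator_pos (s : Set ℕ) [Semiring α] (n : ℕ) (h : n ∈ s) :
    coeff (R := α) n (indicatorSeries _ s) = 1 := by rw [coeff_indicator, if_pos h]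

theorem coeff_indicator_neg (s : Set ℕ) [Semiring α] (n : ℕ) (h : n ∉ s) :
    coeff (R := α) n (indicatorSeries _ s) = 0 := by rw [coeff_indicator, if_neg h]

theorem constantCoeff_indicator (s : Set ℕ) [Semiring α] :
    constantCoeff (R := α) (indicatorSeries _ s) = if 0 ∈ s then 1 else 0 :=
  rfl

theorem two_series (i : ℕ) [Semiring α] :
    1 + (X : PowerSeries α) ^ i.succ = indicatorSeries α {0, i.succ} := by
  ext n
  simp only [coeff_indicator, coeff_one, coeff_X_pow, Set.mem_insert_iff, Set.mem_singleton_iff,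
    map_add]
  cases' n with d
  · simp [(Nat.succ_ne_zero i).symm]
  · simp [Nat.succ_ne_zero d]

theorem num_series' [Field α] (i : ℕ) :
    (1 - (X : PowerSeries α) ^ (i + 1))⁻¹ = indicatorSeries α {k | i + 1 ∣ k} := by
  rw [PowerSeries.inv_eq_iff_mul_eq_one]
  · ext n
    cases n with
    | zero => simp [mul_sub, zero_pow, constantCoeff_indicator]
    | succ n =>
      simp only [coeff_one, if_false, mul_sub, mul_one, coeff_indicator,
        LinearMap.map_sub, reduceCtorEq]
      simp_rw [coeff_mul, coeff_X_pow, coeff_indicator, @boole_mul _ _ _ _]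
      erw [@sum_ite _ _ _ _ _ (fun _ => Classical.propDecidable _), sum_ite]
      simp_rw [@filter_filter _ _ _ _ _, sum_const_zero, add_zero, sum_const, nsmul_eq_mul, mul_one,
        sub_eq_iff_eq_add, zero_add]
      symm
      split_ifs with h
      · suffices #{a ∈ antidiagonal (n + 1) | i + 1 ∣ a.fst ∧ a.snd = i + 1} = 1 by
          simp only [Set.mem_setOf_eq]; convert congr_arg ((↑) : ℕ → α) this; norm_cast
        rw [card_eq_one]
        cases' h with p hp
        refine ⟨((i + 1) * (p - 1), i + 1), ?_⟩
        ext ⟨a₁, a₂⟩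
        simp only [mem_filter, Prod.mk_inj, HasAntidiagonal.mem_antidiagonal, mem_singleton]
        constructor
        · rintro ⟨a_left, ⟨a, rfl⟩, rfl⟩
          refine ⟨?_, rfl⟩
          rw [Nat.mul_sub_left_distrib, ← hp, ← a_left, mul_one, Nat.add_sub_cancel]
        · rintro ⟨rfl, rfl⟩
          match p with
          | 0 => rw [mul_zero] at hp; cases hp
          | p + 1 => rw [hp]; simp [mul_add]
      · suffices #{a ∈ antidiagonal (n + 1) | i + 1 ∣ a.fst ∧ a.snd = i + 1} = 0 by
          simp only [Set.mem_setOf_eq]; convert congr_arg ((↑) : ℕ → α) this; norm_cast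
        rw [card_eq_zero]
        apply eq_empty_of_forall_notMem
        simp only [Prod.forall, mem_filter, not_and, HasAntidiagonal.mem_antidiagonal]
        rintro _ h₁ h₂ ⟨a, rfl⟩ rfl
        apply h
        simp [← h₂]
  · simp [zero_pow]

def mkOdd : ℕ ↪ ℕ :=
  ⟨fun i => 2 * i + 1, fun x y h => by linarith⟩

-- The main workhorse of the partition theorem proof.
theorem partialGF_prop (α : Type*) [CommSemiring α] (n : ℕ) (s : Finset ℕ) (hs : ∀ i ∈ s, 0 < i)
    (c : ℕ → Set ℕ) (hc : ∀ i, i ∉ s → 0 ∈ c i) :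
    #{p : n.Partition | (∀ j, p.parts.count j ∈ c j) ∧ ∀ j ∈ p.parts, j ∈ s} =
      coeff (R := α) n (∏ i ∈ s, indicatorSeries α ((· * i) '' c i)) := by
  simp_rw [coeff_prod, coeff_indicator, prod_boole, sum_boole]
  apply congr_arg
  simp only [mem_univ, forall_true_left, not_and, not_forall, exists_prop,
    Set.mem_image, not_exists]
  set φ : (a : Nat.Partition n) →
    a ∈ filter (fun p ↦ (∀ (j : ℕ), Multiset.count j p.parts ∈ c j) ∧ ∀ j ∈ p.parts, j ∈ s) univ →
    ℕ →₀ ℕ := fun p _ => {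
      toFun := fun i => Multiset.count i p.parts • i
      support := Finset.filter (fun i => i ≠ 0) p.parts.toFinset
      mem_support_toFun := fun a => by
        simp only [smul_eq_mul, ne_eq, mul_eq_zero, Multiset.count_eq_zero]
        rw [not_or, not_not]
        simp only [Multiset.mem_toFinset, not_not, mem_filter] }
  refine Finset.card_bij φ ?_ ?_ ?_
  · intro a ha
    simp only [φ, not_forall, not_exists, not_and, exists_prop, mem_filter]
    rw [mem_finsuppAntidiag]
    dsimp only [ne_eq, smul_eq_mul, id_eq, eq_mpr_eq_cast, le_eq_subset, Finsupp.coe_mk]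
    simp only [mem_univ, forall_true_left, not_and, not_forall, exists_prop,
      mem_filter, true_and] at ha
    refine ⟨⟨?_, fun i ↦ ?_⟩, fun i _ ↦ ⟨a.parts.count i, ha.1 i, rfl⟩⟩
    · conv_rhs => simp [← a.parts_sum]
      rw [sum_multiset_count_of_subset _ s]
      · simp only [smul_eq_mul]
      · intro i
        simp only [Multiset.mem_toFinset, not_not, mem_filter]
        apply ha.2
    · simp only [ne_eq, Multiset.mem_toFinset, not_not, mem_filter, and_imp]
      exact fun hi _ ↦ ha.2 i hi
  · intro p₁ hp₁ p₂ hp₂ h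
    apply Nat.Partition.ext
    simp only [true_and, mem_univ, mem_filter] at hp₁ hp₂
    ext i
    simp only [φ, ne_eq, Multiset.mem_toFinset, not_not, smul_eq_mul, Finsupp.mk.injEq] at h
    by_cases hi : i = 0
    · rw [hi]
      rw [Multiset.count_eq_zero_of_notMem]
      · rw [Multiset.count_eq_zero_of_notMem]
        intro a; exact Nat.lt_irrefl 0 (hs 0 (hp₂.2 0 a))
      intro a; exact Nat.lt_irrefl 0 (hs 0 (hp₁.2 0 a))
    · rw [← mul_left_inj' hi]
      rw [funext_iff] at h
      exact h.2 i
  · simp only [φ, mem_filter, mem_finsuppAntidiag, mem_univ, exists_prop, true_and, and_assoc]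
    rintro f ⟨hf, hf₃, hf₄⟩
    have hf' : f ∈ finsuppAntidiag s n := mem_finsuppAntidiag.mpr ⟨hf, hf₃⟩
    simp only [mem_finsuppAntidiag] at hf'
    refine ⟨⟨∑ i ∈ s, Multiset.replicate (f i / i) i, ?_, ?_⟩, ?_, ?_, ?_⟩
    · intro i hi
      simp only [exists_prop, Multiset.mem_sum, mem_map, Function.Embedding.coeFn_mk] at hi
      rcases hi with ⟨t, ht, z⟩
      apply hs
      rwa [Multiset.eq_of_mem_replicate z]
    · simp_rw [Multiset.sum_sum, Multiset.sum_replicate, Nat.nsmul_eq_mul]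
      rw [← hf'.1]
      refine sum_congr rfl fun i hi => Nat.div_mul_cancel ?_
      rcases hf₄ i hi with ⟨w, _, hw₂⟩
      rw [← hw₂]
      exact dvd_mul_left _ _
    · intro i
      simp_rw [Multiset.count_sum', Multiset.count_replicate, sum_ite_eq']
      split_ifs with h
      · rcases hf₄ i h with ⟨w, hw₁, hw₂⟩
        rwa [← hw₂, Nat.mul_div_cancel _ (hs i h)]
      · exact hc _ h
    · intro i hi
      rw [Multiset.mem_sum] at hi
      rcases hi with ⟨j, hj₁, hj₂⟩
      rwa [Multiset.eq_of_mem_replicate hj₂]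
    · ext i
      simp_rw [Multiset.count_sum', Multiset.count_replicate, sum_ite_eq']
      simp only [ne_eq, Multiset.mem_toFinset, not_not, smul_eq_mul, ite_mul,
        zero_mul, Finsupp.coe_mk]
      split_ifs with h
      · apply Nat.div_mul_cancel
        rcases hf₄ i h with ⟨w, _, hw₂⟩
        apply Dvd.intro_left _ hw₂
      · apply symm
        rw [← Finsupp.notMem_support_iff]
        exact notMem_mono hf'.2 h




-- ==================== Power series lemmas ====================

theorem dvd_prod_sub_one {d : ℕ} (t : Finset ℕ) (f : ℕ → PowerSeries ℚ)
    (h : ∀ k ∈ t, (X : PowerSeries ℚ) ^ d ∣ (f k - 1)) :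
    (X : PowerSeries ℚ) ^ d ∣ (∏ k ∈ t, f k) - 1 := by
  classical
  induction t using Finset.induction with
  | empty => simp
  | insert _ _ hx ih =>
    rename_i a s
    rw [Finset.prod_insert hx]
    have h1 : (X : PowerSeries ℚ) ^ d ∣ (f a - 1) := h a (Finset.mem_insert_self a s)
    have h2 := ih (fun k hk => h k (Finset.mem_insert_of_mem hk))
    have he : f a * (∏ k ∈ s, f k) - 1 = f a * ((∏ k ∈ s, f k) - 1) + (f a - 1) := by ring
    rw [he]
    exact dvd_add (Dvd.dvd.mul_left h2 _) h1

theorem coeff_mul_tail {b d : ℕ} (hb : b < d) (A T : PowerSeries ℚ)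
    (hT : (X : PowerSeries ℚ) ^ d ∣ (T - 1)) :
    coeff (R := ℚ) b (A * T) = coeff (R := ℚ) b A := by
  have he : A * T - A = A * (T - 1) := by ring
  have hdvd : (X : PowerSeries ℚ) ^ d ∣ (A * T - A) := he ▸ Dvd.dvd.mul_left hT A
  have h0 := (PowerSeries.X_pow_dvd_iff.mp hdvd) b hb
  rw [map_sub] at h0
  linarith

theorem eulerProd_coeff_eq (b n : ℕ) (hb : b ≤ n) :
    coeff (R := ℚ) b (eulerProd 4) =
      coeff (R := ℚ) b (∏ k ∈ range (n + 1), (1 - (X : PowerSeries ℚ) ^ (4 * (k + 1)))) := by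
  rw [eulerProd, coeff_mk]
  rw [← Finset.prod_range_mul_prod_Ico _ (Nat.succ_le_succ hb)]
  rw [coeff_mul_tail (Nat.lt_succ_self b)]
  apply dvd_prod_sub_one
  intro k hk
  rw [Finset.mem_Ico] at hk
  have he : (1 : PowerSeries ℚ) - X ^ (4 * (k + 1)) - 1 = -(X ^ (4 * (k + 1))) := by ring
  rw [he]
  exact dvd_neg.mpr (pow_dvd_pow _ (by omega))

/-- number of partitions of `j` into parts divisible by 4 -/
def p4 (j : ℕ) : ℕ := Nat.card {p : j.Partition // ∀ x ∈ p.parts, 4 ∣ x}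

theorem p4_coeff (n j : ℕ) (hj : j ≤ n) :
    (p4 j : ℚ) = coeff (R := ℚ) j (∏ k ∈ range (n + 1), (1 - (X : PowerSeries ℚ) ^ (4 * (k + 1)))⁻¹) := by
  have hinj : Function.Injective (fun k : ℕ => 4 * (k + 1)) := by
    intro a b h; dsimp at h; omega
  set s : Finset ℕ := (range (n + 1)).map ⟨fun k => 4 * (k + 1), hinj⟩ with hs
  have hpos : ∀ i ∈ s, 0 < i := by
    intro i hi
    simp only [hs, mem_map, Function.Embedding.coeFn_mk, mem_range] at hi
    obtain ⟨k, -, rfl⟩ := hi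
    omega
  have key := partialGF_prop ℚ j s hpos (fun _ => Set.univ) (fun _ _ => trivial)
  have hcards : (p4 j : ℚ) =
      (#{p : j.Partition | (∀ i, p.parts.count i ∈ (Set.univ : Set ℕ)) ∧ ∀ i ∈ p.parts, i ∈ s} : ℚ) := by
    congr 1
    rw [p4, Nat.card_eq_fintype_card, Fintype.card_subtype]
    congr 1
    apply Finset.filter_congr
    intro p _
    simp only [Set.mem_univ, forall_const, true_and]
    constructor
    · intro h x hx
      obtain ⟨d, rfl⟩ := h x hx
      have hxle : 4 * d ≤ j := by
        have := Multiset.single_le_sum (fun _ _ => Nat.zero_le _) _ hx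
        rwa [p.parts_sum] at this
      have hxpos : 0 < 4 * d := p.parts_pos hx
      simp only [hs, mem_map, Function.Embedding.coeFn_mk, mem_range]
      exact ⟨d - 1, by omega, by omega⟩
    · intro h x hx
      have := h x hx
      simp only [hs, mem_map, Function.Embedding.coeFn_mk, mem_range] at this
      obtain ⟨k, -, rfl⟩ := this
      exact ⟨k + 1, rfl⟩
  rw [hcards, key, hs, Finset.prod_map]
  refine congrArg _ (Finset.prod_congr rfl ?_)
  intro k _
  show indicatorSeries ℚ ((fun x => x * (4 * (k + 1))) '' Set.univ) = _
  have h4 : 4 * (k + 1) = (4 * k + 3) + 1 := by ring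
  rw [h4, num_series']
  have hset : ((fun x => x * (4 * k + 3 + 1)) '' Set.univ) = {m | 4 * k + 3 + 1 ∣ m} := by
    ext m
    simp only [Set.mem_image, Set.mem_univ, true_and, Set.mem_setOf_eq]
    constructor
    · rintro ⟨a, rfl⟩; exact Dvd.intro_left a rfl
    · rintro ⟨c, rfl⟩; exact ⟨c, mul_comm _ _⟩
  rw [hset]

theorem constCoeff_factor (m : ℕ) (hm : 0 < m) :
    constantCoeff (R := ℚ) (1 - (X : PowerSeries ℚ) ^ m) = 1 := by
  rw [map_sub, map_one, map_pow, constantCoeff_X, zero_pow (by omega), sub_zero]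

theorem eulerProd_inv : (eulerProd 4)⁻¹ = PowerSeries.mk fun j => ((p4 j : ℚ)) := by
  rw [PowerSeries.inv_eq_iff_mul_eq_one]
  · ext j
    rw [coeff_mul]
    have hstep : ∀ ab ∈ antidiagonal j,
        coeff (R := ℚ) ab.1 (PowerSeries.mk fun i => ((p4 i : ℚ))) * coeff (R := ℚ) ab.2 (eulerProd 4) =
        coeff (R := ℚ) ab.1 (∏ k ∈ range (j + 1), (1 - (X : PowerSeries ℚ) ^ (4 * (k + 1)))⁻¹) *
        coeff (R := ℚ) ab.2 (∏ k ∈ range (j + 1), (1 - (X : PowerSeries ℚ) ^ (4 * (k + 1)))) := by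
      rintro ⟨a, b⟩ hab
      rw [Finset.HasAntidiagonal.mem_antidiagonal] at hab
      rw [coeff_mk, ← p4_coeff j a (by omega), ← eulerProd_coeff_eq b j (by omega)]
    rw [Finset.sum_congr rfl hstep, ← coeff_mul]
    have hprod : (∏ k ∈ range (j + 1), (1 - (X : PowerSeries ℚ) ^ (4 * (k + 1)))⁻¹) *
        (∏ k ∈ range (j + 1), (1 - (X : PowerSeries ℚ) ^ (4 * (k + 1)))) = 1 := by
      rw [← Finset.prod_mul_distrib]
      rw [Finset.prod_congr rfl (fun k _ =>
        PowerSeries.inv_mul_cancel _ (by rw [constCoeff_factor _ (by omega)]; exact one_ne_zero))]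
      simp
    rw [hprod]
  · have : constantCoeff (R := ℚ) (eulerProd 4) = 1 := by
      rw [← coeff_zero_eq_constantCoeff_apply, eulerProd, coeff_mk,
        show (0:ℕ) + 1 = 1 from rfl, Finset.prod_range_one,
        coeff_zero_eq_constantCoeff_apply, constCoeff_factor _ (by omega)]
    rw [this]; exact one_ne_zero
-- ==================== Combinatorial part ====================

def Sig (s : Multiset ℕ) : Prop := ∀ x ∈ s, ∀ y ∈ s, Even x → Odd y → x < y

theorem Sig.mono {s t : Multiset ℕ} (h : t ≤ s) (hs : Sig s) : Sig t :=
  fun x hx y hy => hs x (Multiset.mem_of_le h hx) y (Multiset.mem_of_le h hy)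

def evens (s : Multiset ℕ) : Finset ℕ := s.toFinset.filter (fun x => Even x)

def odds (s : Multiset ℕ) : Finset ℕ := s.toFinset.filter (fun x => Odd x)

theorem mem_evens {s : Multiset ℕ} {x : ℕ} : x ∈ evens s ↔ x ∈ s ∧ Even x := by
  simp [evens]

theorem mem_odds {s : Multiset ℕ} {x : ℕ} : x ∈ odds s ↔ x ∈ s ∧ Odd x := by
  simp [odds]

def up (s : Multiset ℕ) : Multiset ℕ :=
  if h : (evens s).Nonempty then ((evens s).max' h + 1) ::ₘ s.erase ((evens s).max' h)
  else 1 ::ₘ s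

def down (s : Multiset ℕ) : Multiset ℕ :=
  if h : (odds s).Nonempty then
    (if (odds s).min' h = 1 then s.erase 1
     else ((odds s).min' h - 1) ::ₘ s.erase ((odds s).min' h))
  else s

theorem up_spec (s : Multiset ℕ) (h0 : ∀ x ∈ s, 0 < x) (hs : Sig s) :
    Sig (up s) ∧ (up s).sum = s.sum + 1 ∧ (∃ y ∈ up s, Odd y) ∧ (∀ x ∈ up s, 0 < x) := by
  by_cases h : (evens s).Nonempty
  · set e := (evens s).max' h with hedef
    have hem : e ∈ s ∧ Even e := mem_evens.mp (Finset.max'_mem _ h)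
    have hmax : ∀ x ∈ s, Even x → x ≤ e := fun x hx hex =>
      Finset.le_max' _ x (mem_evens.mpr ⟨hx, hex⟩)
    have hu : up s = (e + 1) ::ₘ s.erase e := dif_pos h
    have hodd : Odd (e + 1) := Even.add_one hem.2
    rw [hu]
    refine ⟨?_, ?_, ⟨e + 1, Multiset.mem_cons_self _ _, hodd⟩, ?_⟩
    · intro x hx y hy hex hoy
      rcases Multiset.mem_cons.mp hx with rfl | hx'
      · exact absurd hex (Nat.not_even_iff_odd.mpr hodd)
      · have hxs := Multiset.mem_of_mem_erase hx'
        rcases Multiset.mem_cons.mp hy with rfl | hy'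
        · exact Nat.lt_succ_of_le (hmax x hxs hex)
        · exact hs x hxs y (Multiset.mem_of_mem_erase hy') hex hoy
    · rw [Multiset.sum_cons]
      have : e + (s.erase e).sum = s.sum := by
        rw [← Multiset.sum_cons, Multiset.cons_erase hem.1]
      omega
    · intro x hx
      rcases Multiset.mem_cons.mp hx with rfl | hx'
      · omega
      · exact h0 x (Multiset.mem_of_mem_erase hx')
  · have hu : up s = 1 ::ₘ s := dif_neg h
    rw [hu]
    refine ⟨?_, by rw [Multiset.sum_cons]; omega, ⟨1, Multiset.mem_cons_self _ _, odd_one⟩, ?_⟩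
    · intro x hx y hy hex hoy
      rcases Multiset.mem_cons.mp hx with rfl | hx'
      · exact absurd hex (by simp)
      · exact absurd ⟨x, mem_evens.mpr ⟨hx', hex⟩⟩ h
    · intro x hx
      rcases Multiset.mem_cons.mp hx with rfl | hx'
      · omega
      · exact h0 x hx'

theorem down_spec (s : Multiset ℕ) (h0 : ∀ x ∈ s, 0 < x) (hs : Sig s)
    (h : ∃ y ∈ s, Odd y) :
    Sig (down s) ∧ (down s).sum + 1 = s.sum ∧ (∀ x ∈ down s, 0 < x) := by
  obtain ⟨y0, hy0, hoy0⟩ := h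
  have hodds : (odds s).Nonempty := ⟨y0, mem_odds.mpr ⟨hy0, hoy0⟩⟩
  set o := (odds s).min' hodds with hodef
  have hom : o ∈ s ∧ Odd o := mem_odds.mp (Finset.min'_mem _ hodds)
  have hmin : ∀ y ∈ s, Odd y → o ≤ y := fun y hy hoy =>
    Finset.min'_le _ y (mem_odds.mpr ⟨hy, hoy⟩)
  have hd : down s = if o = 1 then s.erase 1 else (o - 1) ::ₘ s.erase o := dif_pos hodds
  have hopos : 0 < o := h0 o hom.1
  rw [hd]
  split_ifs with h1
  · refine ⟨Sig.mono (Multiset.erase_le _ _) hs, ?_, ?_⟩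
    · have : (1 : ℕ) + (s.erase 1).sum = s.sum := by
        rw [← Multiset.sum_cons, Multiset.cons_erase (h1 ▸ hom.1)]
      omega
    · exact fun x hx => h0 x (Multiset.mem_of_mem_erase hx)
  · have heo : Even (o - 1) := Nat.Odd.sub_odd hom.2 odd_one
    refine ⟨?_, ?_, ?_⟩
    · intro x hx y hy hex hoy
      have hyne : y ≠ o - 1 := by
        intro hh; rw [hh] at hoy
        exact (Nat.not_odd_iff_even.mpr heo) hoy
      have hys : y ∈ s := by
        rcases Multiset.mem_cons.mp hy with rfl | hy'
        · exact absurd rfl hyne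
        · exact Multiset.mem_of_mem_erase hy'
      have hoy' : o ≤ y := hmin y hys hoy
      rcases Multiset.mem_cons.mp hx with rfl | hx'
      · omega
      · have hxs := Multiset.mem_of_mem_erase hx'
        have := hs x hxs o hom.1 hex hom.2
        omega
    · rw [Multiset.sum_cons]
      have : o + (s.erase o).sum = s.sum := by
        rw [← Multiset.sum_cons, Multiset.cons_erase hom.1]
      omega
    · intro x hx
      rcases Multiset.mem_cons.mp hx with rfl | hx'
      · omega
      · exact h0 x (Multiset.mem_of_mem_erase hx')

theorem down_up (s : Multiset ℕ) (h0 : ∀ x ∈ s, 0 < x) (hs : Sig s) :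
    down (up s) = s := by
  by_cases h : (evens s).Nonempty
  · set e := (evens s).max' h with hedef
    have hem : e ∈ s ∧ Even e := mem_evens.mp (Finset.max'_mem _ h)
    have hu : up s = (e + 1) ::ₘ s.erase e := dif_pos h
    have hodd : Odd (e + 1) := Even.add_one hem.2
    have hmem : e + 1 ∈ up s := by rw [hu]; exact Multiset.mem_cons_self _ _
    have hodds : (odds (up s)).Nonempty := ⟨e + 1, mem_odds.mpr ⟨hmem, hodd⟩⟩
    have hminval : (odds (up s)).min' hodds = e + 1 := by
      apply le_antisymm
      · exact Finset.min'_le _ _ (mem_odds.mpr ⟨hmem, hodd⟩)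
      · set m := (odds (up s)).min' hodds with hm
        have hmm : m ∈ odds (up s) := by rw [hm]; exact Finset.min'_mem _ hodds
        rw [mem_odds] at hmm
        obtain ⟨hmt, hmo⟩ := hmm
        rw [hu] at hmt
        rcases Multiset.mem_cons.mp hmt with heq | hmt'
        · omega
        · have := hs e hem.1 _ (Multiset.mem_of_mem_erase hmt') hem.2 hmo
          omega
    have hd : down (up s) =
        if (odds (up s)).min' hodds = 1 then (up s).erase 1
        else ((odds (up s)).min' hodds - 1) ::ₘ (up s).erase ((odds (up s)).min' hodds) :=
      dif_pos hodds
    rw [hd, hminval]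
    have hepos : 0 < e := h0 e hem.1
    rw [if_neg (by omega)]
    rw [hu, Multiset.erase_cons_head]
    have : e + 1 - 1 = e := by omega
    rw [this, Multiset.cons_erase hem.1]
  · have hu : up s = 1 ::ₘ s := dif_neg h
    have hmem : (1 : ℕ) ∈ up s := by rw [hu]; exact Multiset.mem_cons_self _ _
    have hodds : (odds (up s)).Nonempty := ⟨1, mem_odds.mpr ⟨hmem, odd_one⟩⟩
    have hminval : (odds (up s)).min' hodds = 1 := by
      apply le_antisymm
      · exact Finset.min'_le _ _ (mem_odds.mpr ⟨hmem, odd_one⟩)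
      · set m := (odds (up s)).min' hodds with hm
        have hmm : m ∈ odds (up s) := by rw [hm]; exact Finset.min'_mem _ hodds
        rw [mem_odds] at hmm
        obtain ⟨hmt, hmo⟩ := hmm
        rw [hu] at hmt
        rcases Multiset.mem_cons.mp hmt with heq | hmt'
        · omega
        · have := h0 _ hmt'
          omega
    have hd : down (up s) =
        if (odds (up s)).min' hodds = 1 then (up s).erase 1
        else ((odds (up s)).min' hodds - 1) ::ₘ (up s).erase ((odds (up s)).min' hodds) :=
      dif_pos hodds
    rw [hd, hminval, if_pos rfl, hu, Multiset.erase_cons_head]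

theorem up_down (s : Multiset ℕ) (h0 : ∀ x ∈ s, 0 < x) (hs : Sig s)
    (h : ∃ y ∈ s, Odd y) : up (down s) = s := by
  obtain ⟨y0, hy0, hoy0⟩ := h
  have hodds : (odds s).Nonempty := ⟨y0, mem_odds.mpr ⟨hy0, hoy0⟩⟩
  set o := (odds s).min' hodds with hodef
  have hom : o ∈ s ∧ Odd o := mem_odds.mp (Finset.min'_mem _ hodds)
  have hmin : ∀ y ∈ s, Odd y → o ≤ y := fun y hy hoy =>
    Finset.min'_le _ y (mem_odds.mpr ⟨hy, hoy⟩)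
  have hd : down s = if o = 1 then s.erase 1 else (o - 1) ::ₘ s.erase o := dif_pos hodds
  by_cases h1 : o = 1
  · rw [hd, if_pos h1]
    have hne : ¬(evens (s.erase 1)).Nonempty := by
      rintro ⟨x, hx⟩
      obtain ⟨hxt, hex⟩ := mem_evens.mp hx
      have hxs := Multiset.mem_of_mem_erase hxt
      have h1s : (1 : ℕ) ∈ s := h1 ▸ hom.1
      have := hs x hxs 1 h1s hex odd_one
      have := h0 x hxs
      omega
    have hu : up (s.erase 1) = 1 ::ₘ s.erase 1 := dif_neg hne
    rw [hu, Multiset.cons_erase (h1 ▸ hom.1)]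
  · rw [hd, if_neg h1]
    set t := (o - 1) ::ₘ s.erase o with htdef
    have heo : Even (o - 1) := Nat.Odd.sub_odd hom.2 odd_one
    have hmem : o - 1 ∈ t := Multiset.mem_cons_self _ _
    have hev : (evens t).Nonempty := ⟨o - 1, mem_evens.mpr ⟨hmem, heo⟩⟩
    have hmaxval : (evens t).max' hev = o - 1 := by
      apply le_antisymm
      · set m := (evens t).max' hev with hm
        have hmm : m ∈ evens t := by rw [hm]; exact Finset.max'_mem _ hev
        rw [mem_evens] at hmm
        obtain ⟨hmt, hme⟩ := hmm
        rw [htdef] at hmt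
        rcases Multiset.mem_cons.mp hmt with heq | hmt'
        · omega
        · have := hs _ (Multiset.mem_of_mem_erase hmt') o hom.1 hme hom.2
          omega
      · exact Finset.le_max' _ _ (mem_evens.mpr ⟨hmem, heo⟩)
    have hu : up t = ((evens t).max' hev + 1) ::ₘ t.erase ((evens t).max' hev) := dif_pos hev
    rw [hu, hmaxval, htdef, Multiset.erase_cons_head]
    have hopos : 0 < o := h0 o hom.1
    have : o - 1 + 1 = o := by omega
    rw [this, Multiset.cons_erase hom.1]

def A (n : ℕ) : ℕ := Nat.card {p : n.Partition // Sig p.parts}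

def PE (n : ℕ) : ℕ := Nat.card {p : n.Partition // ∀ x ∈ p.parts, Even x}

def recEquiv (n : ℕ) : {q : n.Partition // Sig q.parts} ≃
    {p : (n + 1).Partition // Sig p.parts ∧ ∃ y ∈ p.parts, Odd y} where
  toFun q :=
    ⟨⟨up q.1.parts, fun {i} hi => (up_spec q.1.parts (fun _ hx => q.1.parts_pos hx) q.2).2.2.2 i hi,
      by rw [(up_spec q.1.parts (fun _ hx => q.1.parts_pos hx) q.2).2.1, q.1.parts_sum]⟩,
      (up_spec q.1.parts (fun _ hx => q.1.parts_pos hx) q.2).1,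
      (up_spec q.1.parts (fun _ hx => q.1.parts_pos hx) q.2).2.2.1⟩
  invFun p :=
    ⟨⟨down p.1.parts, fun {i} hi => (down_spec p.1.parts (fun _ hx => p.1.parts_pos hx) p.2.1 p.2.2).2.2 i hi,
      by have := (down_spec p.1.parts (fun _ hx => p.1.parts_pos hx) p.2.1 p.2.2).2.1
         rw [p.1.parts_sum] at this; omega⟩,
      (down_spec p.1.parts (fun _ hx => p.1.parts_pos hx) p.2.1 p.2.2).1⟩
  left_inv q := by
    apply Subtype.ext
    apply Nat.Partition.ext
    exact down_up q.1.parts (fun _ hx => q.1.parts_pos hx) q.2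
  right_inv p := by
    apply Subtype.ext
    apply Nat.Partition.ext
    exact up_down p.1.parts (fun _ hx => p.1.parts_pos hx) p.2.1 p.2.2

theorem natcard_subtype {α : Type*} [Fintype α] (P : α → Prop) [DecidablePred P] :
    Nat.card {x // P x} = #(univ.filter P) := by
  rw [Nat.card_eq_fintype_card, Fintype.card_subtype]

theorem A_succ (n : ℕ) : A (n + 1) = PE (n + 1) + A n := by
  have hA1 : A (n + 1) = #((univ : Finset ((n + 1).Partition)).filter (fun p => Sig p.parts)) :=
    natcard_subtype _
  have hPE : PE (n + 1) = #((univ : Finset ((n + 1).Partition)).filter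
      (fun p => ∀ x ∈ p.parts, Even x)) := natcard_subtype _
  have hA : A n = #((univ : Finset ((n + 1).Partition)).filter
      (fun p => Sig p.parts ∧ ∃ y ∈ p.parts, Odd y)) :=
    (Nat.card_congr (recEquiv n)).trans (natcard_subtype _)
  rw [hA1, hPE, hA]
  have hsplit := Finset.card_filter_add_card_filter_not
    (s := (univ : Finset ((n + 1).Partition)).filter (fun p => Sig p.parts))
    (p := fun p => ∃ y ∈ p.parts, Odd y)
  rw [Finset.filter_filter, Finset.filter_filter] at hsplit
  have heq : (univ : Finset ((n + 1).Partition)).filter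
      (fun p => Sig p.parts ∧ ¬∃ y ∈ p.parts, Odd y) =
      (univ : Finset ((n + 1).Partition)).filter (fun p => ∀ x ∈ p.parts, Even x) := by
    apply Finset.filter_congr
    intro p _
    constructor
    · rintro ⟨-, hno⟩ x hx
      by_contra hex
      exact hno ⟨x, hx, Nat.not_even_iff_odd.mp hex⟩
    · intro hall
      constructor
      · intro x hx y hy hex hoy
        exact absurd (hall y hy) (Nat.not_even_iff_odd.mpr hoy)
      · rintro ⟨y, hy, hoy⟩
        exact (Nat.not_even_iff_odd.mpr hoy) (hall y hy)
  rw [heq] at hsplit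
  omega

theorem parts_zero (p : Nat.Partition 0) : p.parts = 0 := by
  apply Multiset.eq_zero_of_forall_notMem
  intro x hx
  have h1 := p.parts_pos hx
  have h2 : x ≤ Multiset.sum p.parts := Multiset.single_le_sum (fun _ _ => Nat.zero_le _) _ hx
  rw [p.parts_sum] at h2
  omega

theorem A_zero : A 0 = 1 := by
  rw [A]
  have : ∀ p : Nat.Partition 0, Sig p.parts := by
    intro p x hx
    rw [parts_zero p] at hx
    simp at hx
  haveI : Unique {p : Nat.Partition 0 // Sig p.parts} :=
    ⟨⟨⟨default, this default⟩⟩, fun a => Subtype.ext (Unique.uniq _ _)⟩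
  exact Nat.card_unique

theorem PE_zero : PE 0 = 1 := by
  rw [PE]
  have : ∀ p : Nat.Partition 0, ∀ x ∈ p.parts, Even x := by
    intro p x hx
    rw [parts_zero p] at hx
    simp at hx
  haveI : Unique {p : Nat.Partition 0 // ∀ x ∈ p.parts, Even x} :=
    ⟨⟨⟨default, this default⟩⟩, fun a => Subtype.ext (Unique.uniq _ _)⟩
  exact Nat.card_unique

theorem A_eq (n : ℕ) : A n = ∑ m ∈ range (n + 1), PE m := by
  induction n with
  | zero => simp [A_zero, PE_zero]
  | succ n ih => rw [Finset.sum_range_succ, ← ih, A_succ]; omega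
-- ==================== doubling: PE m = p4 (2m) ====================

theorem sum_map_two (s : Multiset ℕ) : (s.map (fun x => 2 * x)).sum = 2 * s.sum := by
  induction s using Multiset.induction with
  | empty => simp
  | cons a t ih => simp_all [Multiset.sum_cons, mul_add]

theorem sum_map_half (s : Multiset ℕ) (h : ∀ x ∈ s, 2 ∣ x) :
    (s.map (fun x => x / 2)).sum * 2 = s.sum := by
  induction s using Multiset.induction with
  | empty => simp
  | cons a t ih =>
    simp only [Multiset.map_cons, Multiset.sum_cons]
    have ha : 2 ∣ a := h a (Multiset.mem_cons_self _ _)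
    have ht := ih (fun x hx => h x (Multiset.mem_cons_of_mem hx))
    obtain ⟨c, rfl⟩ := ha
    omega

def doubleEquiv (m : ℕ) : {p : m.Partition // ∀ x ∈ p.parts, Even x} ≃
    {p : (2 * m).Partition // ∀ x ∈ p.parts, 4 ∣ x} where
  toFun q :=
    ⟨⟨q.1.parts.map (fun x => 2 * x),
      fun {i} hi => by
        obtain ⟨a, ha, rfl⟩ := Multiset.mem_map.mp hi
        have := q.1.parts_pos ha; omega,
      by rw [sum_map_two, q.1.parts_sum]⟩,
      by
        intro x hx
        obtain ⟨a, ha, rfl⟩ := Multiset.mem_map.mp hx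
        obtain ⟨b, rfl⟩ := q.2 a ha
        exact ⟨b, by ring⟩⟩
  invFun p :=
    ⟨⟨p.1.parts.map (fun x => x / 2),
      fun {i} hi => by
        obtain ⟨a, ha, rfl⟩ := Multiset.mem_map.mp hi
        have h1 := p.1.parts_pos ha
        obtain ⟨c, rfl⟩ := p.2 a ha
        omega,
      by
        have := sum_map_half p.1.parts (fun x hx => dvd_trans ⟨2, rfl⟩ (p.2 x hx))
        rw [p.1.parts_sum] at this
        omega⟩,
      by
        intro x hx
        obtain ⟨a, ha, rfl⟩ := Multiset.mem_map.mp hx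
        obtain ⟨c, rfl⟩ := p.2 a ha
        exact ⟨c, by omega⟩⟩
  left_inv q := by
    apply Subtype.ext
    apply Nat.Partition.ext
    dsimp only
    rw [Multiset.map_map]
    have hc : q.1.parts.map ((fun x => x / 2) ∘ fun x => 2 * x) = q.1.parts.map id := by
      apply Multiset.map_congr rfl
      intro x _
      simp only [Function.comp_apply, id_eq]
      omega
    rw [hc, Multiset.map_id]
  right_inv p := by
    apply Subtype.ext
    apply Nat.Partition.ext
    dsimp only
    rw [Multiset.map_map]
    have hc : p.1.parts.map ((fun x => 2 * x) ∘ fun x => x / 2) = p.1.parts.map id := by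
      apply Multiset.map_congr rfl
      intro x hx
      obtain ⟨c, rfl⟩ := p.2 x hx
      simp only [Function.comp_apply, id_eq]
      omega
    rw [hc, Multiset.map_id]

theorem PE_eq_p4 (m : ℕ) : PE m = p4 (2 * m) := Nat.card_congr (doubleEquiv m)

-- ==================== rhoEps lemmas ====================

theorem rho_pred_m (n : ℕ) (p : (2 * n).Partition)
    (hp : ∃ m ∈ p.parts, p.parts.count m = 1 ∧ (∀ x ∈ p.parts, x ≤ m) ∧
      (p.parts.erase m).sum = m ∧
      ∀ x ∈ p.parts.erase m, ∀ y ∈ p.parts.erase m, Even x → Odd y → x < y) :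
    n ∈ p.parts ∧ p.parts.count n = 1 ∧ (p.parts.erase n).sum = n ∧ Sig (p.parts.erase n) := by
  obtain ⟨m, hm, hcount, hle, hsum, hsig⟩ := hp
  have hps : m + (p.parts.erase m).sum = 2 * n := by
    rw [← Multiset.sum_cons, Multiset.cons_erase hm, p.parts_sum]
  have hmn : m = n := by omega
  subst hmn
  exact ⟨hm, hcount, hsum, hsig⟩

def rhoEquiv (n : ℕ) (hn : 1 ≤ n) :
    {p : (2 * n).Partition // ∃ m ∈ p.parts, p.parts.count m = 1 ∧
      (∀ x ∈ p.parts, x ≤ m) ∧ (p.parts.erase m).sum = m ∧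
      ∀ x ∈ p.parts.erase m, ∀ y ∈ p.parts.erase m, Even x → Odd y → x < y} ≃
    {q : n.Partition // Sig q.parts ∧ q.parts ≠ {n}} where
  toFun p :=
    ⟨⟨p.1.parts.erase n, fun {i} hi => p.1.parts_pos (Multiset.mem_of_mem_erase hi),
      (rho_pred_m n p.1 p.2).2.2.1⟩,
      (rho_pred_m n p.1 p.2).2.2.2,
      by
        intro heq
        have heq' : p.1.parts.erase n = {n} := heq
        have h1 := (rho_pred_m n p.1 p.2).2.1
        have h2 : (p.1.parts.erase n).count n = p.1.parts.count n - 1 :=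
          Multiset.count_erase_self _ _
        rw [heq'] at h2
        rw [Multiset.count_singleton_self] at h2
        omega⟩
  invFun q :=
    ⟨⟨n ::ₘ q.1.parts,
      fun {i} hi => by
        rcases Multiset.mem_cons.mp hi with rfl | hi'
        · omega
        · exact q.1.parts_pos hi',
      by rw [Multiset.sum_cons, q.1.parts_sum]; ring⟩,
      n, Multiset.mem_cons_self _ _,
      by
        rw [Multiset.count_cons_self]
        have hnot : n ∉ q.1.parts := by
          intro hmem
          have hsum : n + (q.1.parts.erase n).sum = n := by
            rw [← Multiset.sum_cons, Multiset.cons_erase hmem, q.1.parts_sum]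
          have hz : q.1.parts.erase n = 0 := by
            apply Multiset.eq_zero_of_forall_notMem
            intro x hx
            have hpos := q.1.parts_pos (Multiset.mem_of_mem_erase hx)
            have hle : x ≤ (q.1.parts.erase n).sum :=
              Multiset.single_le_sum (fun _ _ => Nat.zero_le _) _ hx
            omega
          apply q.2.2
          rw [← Multiset.cons_erase hmem, hz]
          rfl
        rw [Multiset.count_eq_zero_of_notMem hnot],
      by
        intro x hx
        rcases Multiset.mem_cons.mp hx with rfl | hx'
        · exact le_refl _
        · have := Multiset.single_le_sum (fun _ _ => Nat.zero_le _) _ hx'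
          rw [q.1.parts_sum] at this
          exact this,
      by rw [Multiset.erase_cons_head, q.1.parts_sum],
      by rw [Multiset.erase_cons_head]; exact q.2.1⟩
  left_inv p := by
    apply Subtype.ext
    apply Nat.Partition.ext
    exact Multiset.cons_erase (rho_pred_m n p.1 p.2).1
  right_inv q := by
    apply Subtype.ext
    apply Nat.Partition.ext
    exact Multiset.erase_cons_head _ _

theorem sig_indiscrete (n : ℕ) (hn : 1 ≤ n) : Sig (Nat.Partition.indiscrete n).parts := by
  rw [Nat.Partition.indiscrete_parts (by omega)]
  intro x hx y hy hex hoy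
  rw [Multiset.mem_singleton] at hx hy
  subst hx; subst hy
  exact absurd hex (Nat.not_even_iff_odd.mpr hoy)

theorem rho_even (n : ℕ) (hn : 1 ≤ n) : rhoEps (2 * n) + 1 = A n := by
  have h1 : rhoEps (2 * n) = Nat.card {q : n.Partition // Sig q.parts ∧ q.parts ≠ {n}} :=
    Nat.card_congr (rhoEquiv n hn)
  have h2 : Nat.card {q : n.Partition // Sig q.parts ∧ q.parts ≠ {n}} =
      #((univ : Finset (n.Partition)).filter (fun q => Sig q.parts ∧ q.parts ≠ {n})) :=
    natcard_subtype _
  have h3 : (univ : Finset (n.Partition)).filter (fun q => Sig q.parts ∧ q.parts ≠ {n}) =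
      ((univ : Finset (n.Partition)).filter (fun q => Sig q.parts)).erase
        (Nat.Partition.indiscrete n) := by
    ext q
    rw [Finset.mem_erase, Finset.mem_filter, Finset.mem_filter]
    constructor
    · rintro ⟨hu, hsig, hne⟩
      refine ⟨?_, hu, hsig⟩
      intro heq
      apply hne
      rw [heq, Nat.Partition.indiscrete_parts (by omega)]
    · rintro ⟨hne, hu, hsig⟩
      refine ⟨hu, hsig, ?_⟩
      intro heq
      apply hne
      apply Nat.Partition.ext
      rw [heq, Nat.Partition.indiscrete_parts (by omega)]
  have hmem : Nat.Partition.indiscrete n ∈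
      (univ : Finset (n.Partition)).filter (fun q => Sig q.parts) :=
    Finset.mem_filter.mpr ⟨Finset.mem_univ _, sig_indiscrete n hn⟩
  have h4 : A n = #((univ : Finset (n.Partition)).filter (fun q => Sig q.parts)) :=
    natcard_subtype _
  have h5 := Finset.card_erase_of_mem hmem
  have h6 : 1 ≤ #((univ : Finset (n.Partition)).filter (fun q => Sig q.parts)) :=
    Finset.card_pos.mpr ⟨_, hmem⟩
  rw [h1, h2, h3, h5, h4]
  omega

theorem rho_odd (k : ℕ) : rhoEps (2 * k + 1) = 0 := by
  unfold rhoEps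
  haveI : IsEmpty {p : (2 * k + 1).Partition // ∃ m ∈ p.parts, p.parts.count m = 1 ∧
      (∀ x ∈ p.parts, x ≤ m) ∧ (p.parts.erase m).sum = m ∧
      ∀ x ∈ p.parts.erase m, ∀ y ∈ p.parts.erase m, Even x → Odd y → x < y} := by
    refine ⟨fun pp => ?_⟩
    obtain ⟨p, m, hm, hcount, hle, hsum, hsig⟩ := pp
    have : m + (p.parts.erase m).sum = 2 * k + 1 := by
      rw [← Multiset.sum_cons, Multiset.cons_erase hm, p.parts_sum]
    omega
  exact Nat.card_of_isEmpty

-- ==================== final coefficient computation ====================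

theorem sum_if_even (m : ℕ) (g : ℕ → ℚ) :
    ∑ a ∈ range (2 * m), (if 2 ∣ a then g a else 0) = ∑ i ∈ range m, g (2 * i) := by
  induction m with
  | zero => simp
  | succ m ih =>
    have h2 : 2 * (m + 1) = (2 * m + 1) + 1 := by ring
    rw [h2, Finset.sum_range_succ, Finset.sum_range_succ, ih,
      if_neg (by omega : ¬ 2 ∣ 2 * m + 1), if_pos ⟨m, rfl⟩, add_zero, Finset.sum_range_succ]

theorem coeff_final (n : ℕ) :
    PowerSeries.coeff (R := ℚ) (2 * n)
      ((1 - (PowerSeries.X : PowerSeries ℚ) ^ 2)⁻¹ * ((eulerProd 4)⁻¹ - 1)) =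
    (∑ i ∈ range (n + 1), (p4 (2 * i) : ℚ)) - 1 := by
  rw [eulerProd_inv]
  have hind : (1 - (PowerSeries.X : PowerSeries ℚ) ^ 2)⁻¹ = indicatorSeries ℚ {k | 2 ∣ k} := by
    have h := num_series' (α := ℚ) 1
    norm_num at h
    exact h
  rw [hind, mul_sub, mul_one, map_sub]
  have h1 : coeff (R := ℚ) (2 * n) (indicatorSeries ℚ {k | 2 ∣ k}) = 1 :=
    coeff_indicator_pos _ _ ⟨n, rfl⟩
  have h2 : coeff (R := ℚ) (2 * n) (indicatorSeries ℚ {k | 2 ∣ k} * PowerSeries.mk fun j => ((p4 j : ℚ)))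
      = ∑ i ∈ range (n + 1), (p4 (2 * i) : ℚ) := by
    rw [coeff_mul]
    have hterm : ∀ ab ∈ antidiagonal (2 * n),
        coeff (R := ℚ) ab.1 (indicatorSeries ℚ {k | 2 ∣ k}) *
          coeff (R := ℚ) ab.2 (PowerSeries.mk fun j => ((p4 j : ℚ))) =
        if 2 ∣ ab.1 then (p4 ab.2 : ℚ) else 0 := by
      rintro ⟨a, b⟩ -
      rw [coeff_indicator, coeff_mk]
      by_cases h : 2 ∣ a
      · simp [h]
      · simp [h]
    rw [Finset.sum_congr rfl hterm, Finset.Nat.sum_antidiagonal_eq_sum_range_succ_mk]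
    dsimp only
    have hext : ∑ k ∈ range (2 * n + 1), (if 2 ∣ k then ((p4 (2 * n - k) : ℚ)) else 0)
        = ∑ k ∈ range (2 * (n + 1)), (if 2 ∣ k then ((p4 (2 * n - k) : ℚ)) else 0) := by
      have h21 : 2 * (n + 1) = (2 * n + 1) + 1 := by ring
      rw [h21]
      conv_rhs => rw [Finset.sum_range_succ]
      rw [if_neg (by omega : ¬ 2 ∣ 2 * n + 1), add_zero]
    rw [hext, sum_if_even]
    rw [← Finset.sum_range_reflect (fun j => ((p4 (2 * j) : ℚ))) (n + 1)]
    apply Finset.sum_congr rfl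
    intro i hi
    rw [mem_range] at hi
    have harg : 2 * (n + 1 - 1 - i) = 2 * n - 2 * i := by omega
    rw [harg]
  rw [h1, h2]

theorem rho_even_coeff (n : ℕ) (hn : 1 ≤ n) :
    (rhoEps (2 * n) : ℚ) =
      PowerSeries.coeff (R := ℚ) (2 * n)
        ((1 - (PowerSeries.X : PowerSeries ℚ) ^ 2)⁻¹ * ((eulerProd 4)⁻¹ - 1)) := by
  rw [coeff_final]
  have h3 : (A n : ℚ) = ∑ i ∈ range (n + 1), (p4 (2 * i) : ℚ) := by
    rw [A_eq]
    push_cast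
    apply Finset.sum_congr rfl
    intro i _
    rw [PE_eq_p4]
  have h4 := rho_even n hn
  have h5 : (rhoEps (2 * n) : ℚ) + 1 = (A n : ℚ) := by exact_mod_cast h4
  linarith [h3, h5]

end
end RhoAux

/-- For every `n ≥ 1`, `ρ_ε(2n)` equals the coefficient of `q^{2n}` in
`(1/(1−q^2)) (1/(q^4;q^4)_∞ − 1)`, and `ρ_ε(2n+1) = 0`. -/
theorem rhoEps_coeff (n : ℕ) (hn : 1 ≤ n) :
    (rhoEps (2 * n) : ℚ) =
        PowerSeries.coeff (R := ℚ) (2 * n)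
          ((1 - (PowerSeries.X : PowerSeries ℚ) ^ 2)⁻¹ * ((eulerProd 4)⁻¹ - 1)) ∧
      rhoEps (2 * n + 1) = 0 := by
  exact ⟨RhoAux.rho_even_coeff n hn, RhoAux.rho_odd n⟩
end
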